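/- arXiv:2510.24433 — 3 statements merged into one kernel-verified Lean document; each statement's English description precedes it below -/
import Mathlib

section
/- (Theorem 1, LSIF reproduces the nearest-neighbor density-ratio estimator.) Let c ∈ ℝ^d, let X_1, …, X_{N₀} ∈ ℝ^d have pairwise distinct distances to c, let 1 ≤ M ≤ N₀, let R_M be the M-th smallest of ‖X_i − c‖, and set Φ(x) = 𝟙(‖x − c‖ ≤ R_M). Let Z_1, …, Z_{N₁} ∈ ℝ^d and K = #{j ∈ {1,…,N₁} : ‖Z_j − c‖ ≤ R_M}. Define Ĥ = (1/N₀) Σ_{i=1}^{N₀} Φ(X_i)² and ĥ = (1/N₁) Σ_{j=1}^{N₁} Φ(Z_j), and the LSIF estimate with λ = 0 as r̂(c) = (Ĥ)⁻¹ ĥ · Φ(c). Then r̂(c) = (N₀/N₁) · K/M. -/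
/-!
Since the distances `‖X i - c‖` are distinct, exactly `M` of the `X i` lie in the ball of radius
`R_M`, so `Ĥ = M / N₀`, while `ĥ = K / N₁` and `Φ c = 1` because `R_M ≥ 0`.
-/

open Finset

theorem Finset.card_filter_le_orderEmbOfFin {α : Type*} [LinearOrder α] (s : Finset α) {n : ℕ}
    (hs : s.card = n) (k : Fin n) : #(s.filter (· ≤ s.orderEmbOfFin hs k)) = k + 1 := by
  set e := s.orderEmbOfFin hs
  calc #(s.filter (· ≤ e k))
      = #((univ.image e).filter (· ≤ e k)) := by rw [s.image_orderEmbOfFin_univ hs]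
    _ = #(Iic k) := by
      rw [filter_image, card_image_of_injective _ e.injective]
      simp only [e.le_iff_le]
      congr 1
      ext
      simp
    _ = k + 1 := Fin.card_Iic k

theorem Finset.card_filter_le_sort_image_getD {ι α : Type*} [Fintype ι] [LinearOrder α]
    {f : ι → α} (hf : Function.Injective f) {k : ℕ} (hk : k < Fintype.card ι) (a : α) :
    #(univ.filter fun i => f i ≤ ((univ.image f).sort (· ≤ ·)).getD k a) = k + 1 := by
  have hcard : #(univ.image f) = Fintype.card ι := by rw [card_image_of_injective _ hf, card_univ]
  rw [← (univ.image f).card_filter_le_orderEmbOfFin hcard ⟨k, hk⟩, filter_image,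
    card_image_of_injective _ hf, orderEmbOfFin_apply,
    List.getD_eq_getElem _ _ (by rwa [length_sort, hcard])]
  rfl

theorem List.getD_nonneg {l : List ℝ} (hl : ∀ x ∈ l, 0 ≤ x) (k : ℕ) : 0 ≤ l.getD k 0 := by
  rcases lt_or_ge k l.length with hk | hk
  · exact List.getD_eq_getElem _ _ hk ▸ hl _ (List.getElem_mem hk)
  · exact (List.getD_eq_default _ _ hk).ge

/-- Theorem 1 (LSIF reproduces the nearest-neighbor density-ratio estimator).
With basis function `Φ(x) = 𝟙(‖x − c‖ ≤ R_M)`, where `R_M` is the `M`-th smallest of the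
distances `‖X i − c‖` (pairwise distinct), `Ĥ = (1/N₀) Σ Φ(X i)²`, `ĥ = (1/N₁) Σ Φ(Z j)`,
and `K = #{j : ‖Z j − c‖ ≤ R_M}`, the LSIF estimate with `λ = 0`, `r̂(c) = Ĥ⁻¹ ĥ Φ(c)`,
equals `(N₀/N₁) · K/M`. -/
theorem lsif_reproduces_nn_density_ratio (d N₀ N₁ M : ℕ)
    (c : EuclideanSpace ℝ (Fin d))
    (X : Fin N₀ → EuclideanSpace ℝ (Fin d))
    (Z : Fin N₁ → EuclideanSpace ℝ (Fin d))
    (hdist : Function.Injective fun i => ‖X i - c‖)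
    (hM : 1 ≤ M) (hMN : M ≤ N₀)
    (RM : ℝ)
    (hRM : RM = ((Finset.univ.image fun i => ‖X i - c‖).sort (· ≤ ·)).getD (M - 1) 0)
    (Φ : EuclideanSpace ℝ (Fin d) → ℝ)
    (hΦ : Φ = fun x => if ‖x - c‖ ≤ RM then 1 else 0)
    (K : ℕ) (hK : K = (Finset.univ.filter fun j => ‖Z j - c‖ ≤ RM).card)
    (H h : ℝ)
    (hH : H = (1 / (N₀ : ℝ)) * ∑ i, (Φ (X i)) ^ 2)
    (hh : h = (1 / (N₁ : ℝ)) * ∑ j, Φ (Z j))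
    (r : ℝ) (hr : r = H⁻¹ * h * Φ c) :
    r = ((N₀ : ℝ) / (N₁ : ℝ)) * ((K : ℝ) / (M : ℝ)) := by
  have hcount : #(univ.filter fun i => ‖X i - c‖ ≤ RM) = M := by
    rw [hRM, card_filter_le_sort_image_getD hdist (by simp; omega)]
    omega
  have hRM_nonneg : 0 ≤ RM := by
    refine hRM ▸ List.getD_nonneg ?_ _
    simp only [mem_sort, mem_image]
    rintro _ ⟨i, -, rfl⟩
    exact norm_nonneg _
  have hΦc : Φ c = 1 := by simp [hΦ, hRM_nonneg]
  have hHM : H = 1 / N₀ * M := by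
    simp only [hH, hΦ, ite_pow, one_pow, ne_eq, OfNat.ofNat_ne_zero, not_false_eq_true, zero_pow]
    rw [sum_boole, hcount]
  have hhK : h = 1 / N₁ * K := by rw [hh, hΦ, hK, sum_boole]
  rw [hr, hHM, hhK, hΦc, one_div, mul_inv, inv_inv]
  ring
end

section
/- Let P be a probability measure, Z a random element, and m a map such that α ↦ E[m(W, α)] is well defined on L²(P)-functions of Z. Suppose α₀ ∈ L²(P) is a Riesz representer, i.e., E[m(W, α)] = E[α₀(Z) α(Z)] for every α ∈ L²(P). Then for every α ∈ L²(P): E[α(Z)² − 2 m(W, α)] = E[(α(Z) − α₀(Z))²] − E[α₀(Z)²]. Consequently α₀ is the unique (up to almost-sure equality) minimizer of α ↦ E[α(Z)² − 2 m(W, α)] over L²(P). -/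
/-! Expanding the square gives `E[(α - α₀)²] = E[α²] - 2 E[α₀ α] + E[α₀²]`, and the Riesz
property turns `E[α₀ α]` into `M α`. So the risk is `E[(α - α₀)²]` up to a constant: it is
minimal at `α₀`, and the minimum is attained only where `E[(α - α₀)²] = 0`, i.e. `α = α₀` a.s. -/

open MeasureTheory

section L2Identities

variable {Ω : Type*} [MeasurableSpace Ω] {μ : Measure Ω} {f g : Ω → ℝ}

lemma integral_sub_sq_eq (hf : MemLp f 2 μ) (hg : MemLp g 2 μ) :
    ∫ ω, (f ω - g ω) ^ 2 ∂μ
      = (∫ ω, f ω ^ 2 ∂μ) - 2 * (∫ ω, g ω * f ω ∂μ) + ∫ ω, g ω ^ 2 ∂μ := by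
  have hgf : Integrable (fun ω => 2 * (g ω * f ω)) μ :=
    (hg.integrable_mul (q := 2) hf).const_mul 2
  calc ∫ ω, (f ω - g ω) ^ 2 ∂μ
      = ∫ ω, f ω ^ 2 - 2 * (g ω * f ω) + g ω ^ 2 ∂μ := by congr 1 with ω; ring
    _ = _ := by
      have hsub : Integrable (fun ω => f ω ^ 2 - 2 * (g ω * f ω)) μ :=
        hf.integrable_sq.sub hgf
      rw [integral_add hsub hg.integrable_sq, integral_sub hf.integrable_sq hgf,
        integral_const_mul]

lemma integral_sub_sq_eq_zero_iff (hf : MemLp f 2 μ) (hg : MemLp g 2 μ) :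
    ∫ ω, (f ω - g ω) ^ 2 ∂μ = 0 ↔ f =ᵐ[μ] g := by
  have hint : Integrable (fun ω => (f ω - g ω) ^ 2) μ := (hf.sub hg).integrable_sq
  rw [integral_eq_zero_iff_of_nonneg (fun ω => sq_nonneg _) hint]
  refine Filter.eventually_congr (Filter.Eventually.of_forall fun ω => ?_)
  simp only [Pi.zero_apply, pow_eq_zero_iff two_ne_zero, sub_eq_zero]

end L2Identities

theorem riesz_regression_risk_general {Ω 𝒳 : Type*} [MeasurableSpace Ω] [MeasurableSpace 𝒳]
    (μ : Measure Ω)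
    (Z : Ω → 𝒳)
    (α₀ : 𝒳 → ℝ) (hα₀ : MemLp (fun ω => α₀ (Z ω)) 2 μ)
    (M : (𝒳 → ℝ) → ℝ)
    (hriesz : ∀ α : 𝒳 → ℝ, MemLp (fun ω => α (Z ω)) 2 μ →
      M α = ∫ ω, α₀ (Z ω) * α (Z ω) ∂μ) :
    (∀ α : 𝒳 → ℝ, MemLp (fun ω => α (Z ω)) 2 μ →
        (∫ ω, (α (Z ω)) ^ 2 ∂μ) - 2 * M α
          = (∫ ω, (α (Z ω) - α₀ (Z ω)) ^ 2 ∂μ) - ∫ ω, (α₀ (Z ω)) ^ 2 ∂μ) ∧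
      (∀ α : 𝒳 → ℝ, MemLp (fun ω => α (Z ω)) 2 μ →
        (∫ ω, (α₀ (Z ω)) ^ 2 ∂μ) - 2 * M α₀ ≤ (∫ ω, (α (Z ω)) ^ 2 ∂μ) - 2 * M α) ∧
      (∀ α : 𝒳 → ℝ, MemLp (fun ω => α (Z ω)) 2 μ →
        (∫ ω, (α (Z ω)) ^ 2 ∂μ) - 2 * M α = (∫ ω, (α₀ (Z ω)) ^ 2 ∂μ) - 2 * M α₀ →
        (fun ω => α (Z ω)) =ᵐ[μ] fun ω => α₀ (Z ω)) := by
  have risk_eq : ∀ α : 𝒳 → ℝ, MemLp (fun ω => α (Z ω)) 2 μ →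
      (∫ ω, (α (Z ω)) ^ 2 ∂μ) - 2 * M α
        = (∫ ω, (α (Z ω) - α₀ (Z ω)) ^ 2 ∂μ) - ∫ ω, (α₀ (Z ω)) ^ 2 ∂μ := by
    intro α hα
    rw [hriesz α hα, integral_sub_sq_eq hα hα₀]
    ring
  have risk_α₀ : (∫ ω, (α₀ (Z ω)) ^ 2 ∂μ) - 2 * M α₀ = -∫ ω, (α₀ (Z ω)) ^ 2 ∂μ := by
    simp [risk_eq α₀ hα₀]
  refine ⟨risk_eq, fun α hα => ?_, fun α hα hmin => ?_⟩
  · rw [risk_eq α hα, risk_α₀]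
    have hdist : 0 ≤ ∫ ω, (α (Z ω) - α₀ (Z ω)) ^ 2 ∂μ :=
      integral_nonneg fun ω => sq_nonneg _
    linarith
  · rw [risk_eq α hα, risk_α₀] at hmin
    exact (integral_sub_sq_eq_zero_iff hα hα₀).mp (by linarith)

/-- Riesz regression risk identity: if `α₀ ∈ L²` is a Riesz representer, i.e.
`E[m(W, α)] = E[α₀(Z) α(Z)]` for every `α ∈ L²`, then for every `α ∈ L²`
`E[α(Z)² − 2 m(W, α)] = E[(α(Z) − α₀(Z))²] − E[α₀(Z)²]`; consequently `α₀` is the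
unique (up to almost-sure equality) minimizer of `α ↦ E[α(Z)² − 2 m(W, α)]` over `L²`. -/
theorem riesz_regression_risk {Ω 𝒳 : Type*} [MeasurableSpace Ω] [MeasurableSpace 𝒳]
    (μ : Measure Ω) [IsProbabilityMeasure μ]
    (Z : Ω → 𝒳) (hZ : Measurable Z)
    (α₀ : 𝒳 → ℝ) (hα₀ : MemLp (fun ω => α₀ (Z ω)) 2 μ)
    (M : (𝒳 → ℝ) → ℝ)
    (hriesz : ∀ α : 𝒳 → ℝ, MemLp (fun ω => α (Z ω)) 2 μ →
      M α = ∫ ω, α₀ (Z ω) * α (Z ω) ∂μ) :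
    (∀ α : 𝒳 → ℝ, MemLp (fun ω => α (Z ω)) 2 μ →
        (∫ ω, (α (Z ω)) ^ 2 ∂μ) - 2 * M α
          = (∫ ω, (α (Z ω) - α₀ (Z ω)) ^ 2 ∂μ) - ∫ ω, (α₀ (Z ω)) ^ 2 ∂μ) ∧
      (∀ α : 𝒳 → ℝ, MemLp (fun ω => α (Z ω)) 2 μ →
        (∫ ω, (α₀ (Z ω)) ^ 2 ∂μ) - 2 * M α₀ ≤ (∫ ω, (α (Z ω)) ^ 2 ∂μ) - 2 * M α) ∧
      (∀ α : 𝒳 → ℝ, MemLp (fun ω => α (Z ω)) 2 μ →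
        (∫ ω, (α (Z ω)) ^ 2 ∂μ) - 2 * M α = (∫ ω, (α₀ (Z ω)) ^ 2 ∂μ) - 2 * M α₀ →
        (fun ω => α (Z ω)) =ᵐ[μ] fun ω => α₀ (Z ω)) :=
  riesz_regression_risk_general μ Z α₀ hα₀ M hriesz
end

section
/- Let D ∈ {0,1}, X be covariates, and w(1, ·), w(0, ·) be bounded measurable functions. Define α(d, x) = 𝟙(d = 1) w(1, x) − 𝟙(d = 0) w(0, x) and the ATE functional m(W, α) = α(1, X) − α(0, X). Then E[α(D, X)² − 2 m(W, α)] = E[ 𝟙(D = 1) w(1, X)² + 𝟙(D = 0) w(0, X)² − 2 ( w(1, X) + w(0, X) ) ]. In particular, the Riesz regression objective for the ATE decomposes as the sum of the two LSIF objectives E[𝟙(D=1) w(1,X)²] − 2E[w(1,X)] and E[𝟙(D=0) w(0,X)²] − 2E[w(0,X)]. -/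
open MeasureTheory

/-! The cross term of `α(D, X)²` vanishes because the events `D = 1` and `D = 0` are disjoint,
and the ATE functional `α(1, X) − α(0, X)` equals `w(1, X) + w(0, X)`; so the two objectives agree
pointwise, and boundedness makes every summand integrable, which lets the expectation split. -/

section Representer

variable {𝒳 : Type*} (w1 w0 : 𝒳 → ℝ)

def ateRieszRepresenter (d : ℕ) (x : 𝒳) : ℝ :=
  (if d = 1 then w1 x else 0) - (if d = 0 then w0 x else 0)

lemma ateRieszRepresenter_sq {d : ℕ} (hd : d = 0 ∨ d = 1) (x : 𝒳) :
    ateRieszRepresenter w1 w0 d x ^ 2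
      = (if d = 1 then w1 x ^ 2 else 0) + (if d = 0 then w0 x ^ 2 else 0) := by
  rcases hd with rfl | rfl <;> simp [ateRieszRepresenter]

lemma ateRieszRepresenter_one_sub_zero (x : 𝒳) :
    ateRieszRepresenter w1 w0 1 x - ateRieszRepresenter w1 w0 0 x = w1 x + w0 x := by
  simp [ateRieszRepresenter]

end Representer

lemma MeasureTheory.Integrable.ite_zero {Ω E : Type*} [MeasurableSpace Ω] [NormedAddCommGroup E]
    {μ : Measure Ω} {f : Ω → E} (hf : Integrable f μ) {p : Ω → Prop} [DecidablePred p]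
    (hp : MeasurableSet {ω | p ω}) : Integrable (fun ω => if p ω then f ω else 0) μ :=
  (hf.indicator hp).congr (.of_forall fun ω => by simp [Set.indicator_apply])

section Integrability

variable {Ω 𝒳 : Type*} [MeasurableSpace Ω] [MeasurableSpace 𝒳] {μ : Measure Ω}
  [IsFiniteMeasure μ] {X : Ω → 𝒳} {w : 𝒳 → ℝ} {C : ℝ}

lemma integrable_comp_of_abs_le (hX : Measurable X) (hw : Measurable w)
    (hwC : ∀ x, |w x| ≤ C) : Integrable (fun ω => w (X ω)) μ :=
  .of_bound (hw.comp hX).aestronglyMeasurable C (.of_forall fun ω => hwC (X ω))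

lemma integrable_sq_comp_of_abs_le (hX : Measurable X) (hw : Measurable w)
    (hwC : ∀ x, |w x| ≤ C) : Integrable (fun ω => w (X ω) ^ 2) μ :=
  integrable_comp_of_abs_le (C := C ^ 2) hX (hw.pow_const 2) fun x =>
    (abs_pow (w x) 2).trans_le (pow_le_pow_left₀ (abs_nonneg _) (hwC x) 2)

end Integrability

/-- The Riesz regression objective for the ATE decomposes into the two LSIF objectives:
for `α(d, x) = 𝟙(d = 1) w(1, x) − 𝟙(d = 0) w(0, x)` and the ATE functional
`m(W, α) = α(1, X) − α(0, X)`,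
`E[α(D, X)² − 2 m(W, α)]
  = E[𝟙(D=1) w(1,X)² + 𝟙(D=0) w(0,X)² − 2(w(1,X) + w(0,X))]`,
which is the sum of `E[𝟙(D=1) w(1,X)²] − 2E[w(1,X)]` and
`E[𝟙(D=0) w(0,X)²] − 2E[w(0,X)]`. -/
theorem riesz_objective_eq_lsif_objectives {Ω 𝒳 : Type*} [MeasurableSpace Ω]
    [MeasurableSpace 𝒳]
    (μ : Measure Ω) [IsProbabilityMeasure μ]
    (X : Ω → 𝒳) (hX : Measurable X)
    (D : Ω → ℕ) (hD : Measurable D) (hD01 : ∀ ω, D ω = 0 ∨ D ω = 1)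
    (w1 w0 : 𝒳 → ℝ) (hw1 : Measurable w1) (hw0 : Measurable w0)
    (C : ℝ) (hw1C : ∀ x, |w1 x| ≤ C) (hw0C : ∀ x, |w0 x| ≤ C)
    (α : ℕ → 𝒳 → ℝ)
    (hα : α = fun d x => (if d = 1 then w1 x else 0) - (if d = 0 then w0 x else 0)) :
    (∫ ω, ((α (D ω) (X ω)) ^ 2 - 2 * (α 1 (X ω) - α 0 (X ω))) ∂μ
        = ∫ ω, ((if D ω = 1 then (w1 (X ω)) ^ 2 else 0)
            + (if D ω = 0 then (w0 (X ω)) ^ 2 else 0)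
            - 2 * (w1 (X ω) + w0 (X ω))) ∂μ) ∧
      (∫ ω, ((α (D ω) (X ω)) ^ 2 - 2 * (α 1 (X ω) - α 0 (X ω))) ∂μ
        = ((∫ ω, (if D ω = 1 then (w1 (X ω)) ^ 2 else 0) ∂μ) - 2 * ∫ ω, w1 (X ω) ∂μ)
          + ((∫ ω, (if D ω = 0 then (w0 (X ω)) ^ 2 else 0) ∂μ)
            - 2 * ∫ ω, w0 (X ω) ∂μ)) := by
  obtain rfl : α = ateRieszRepresenter w1 w0 := hα
  have h_pointwise : ∀ ω, ateRieszRepresenter w1 w0 (D ω) (X ω) ^ 2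
      - 2 * (ateRieszRepresenter w1 w0 1 (X ω) - ateRieszRepresenter w1 w0 0 (X ω))
      = (if D ω = 1 then w1 (X ω) ^ 2 else 0) + (if D ω = 0 then w0 (X ω) ^ 2 else 0)
        - 2 * (w1 (X ω) + w0 (X ω)) := fun ω => by
    rw [ateRieszRepresenter_sq w1 w0 (hD01 ω), ateRieszRepresenter_one_sub_zero]
  have h_treated : Integrable (fun ω => if D ω = 1 then w1 (X ω) ^ 2 else 0) μ :=
    (integrable_sq_comp_of_abs_le (μ := μ) hX hw1 hw1C).ite_zero (hD (measurableSet_singleton 1))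
  have h_control : Integrable (fun ω => if D ω = 0 then w0 (X ω) ^ 2 else 0) μ :=
    (integrable_sq_comp_of_abs_le (μ := μ) hX hw0 hw0C).ite_zero (hD (measurableSet_singleton 0))
  have h_w1 := integrable_comp_of_abs_le (μ := μ) hX hw1 hw1C
  have h_w0 := integrable_comp_of_abs_le (μ := μ) hX hw0 hw0C
  have h_eq := integral_congr_ae (μ := μ) (.of_forall h_pointwise)
  refine ⟨h_eq, h_eq.trans ?_⟩
  rw [integral_sub (h_treated.fun_add h_control) ((h_w1.fun_add h_w0).const_mul 2),
    integral_add h_treated h_control, integral_const_mul, integral_add h_w1 h_w0]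
  ring
end
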